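/- For every n ≥ 7, every decycling set S of the cube of the n-cycle Cₙ³ contains three cyclically consecutive vertices, i.e., there exists i ∈ ℤ/nℤ with i, i+1, i+2 all in S. -/

import Mathlib

open SimpleGraph

/-- `S` is a decycling set of `G` if the subgraph of `G` induced on the complement of `S`
is acyclic. -/
def SimpleGraph.IsDecyclingSet {V : Type*} (G : SimpleGraph V) (S : Set V) : Prop :=
  (G.induce Sᶜ).IsAcyclic

/-- The decycling number `∇(G)` of `G`: the minimum cardinality of a decycling set of `G`. -/
noncomputable def SimpleGraph.decyclingNumber {V : Type*} (G : SimpleGraph V) : ℕ :=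
  sInf {k | ∃ S : Set V, G.IsDecyclingSet S ∧ S.ncard = k}

/-- The cube `Cₙ³` of the `n`-cycle: vertex set `ZMod n`, with `i` adjacent to `j` iff
`i ≠ j` and `i - j ≡ ±1`, `±2`, or `±3 (mod n)`. -/
def cycleCube (n : ℕ) : SimpleGraph (ZMod n) where
  Adj i j := i ≠ j ∧ (i - j = 1 ∨ j - i = 1 ∨ i - j = 2 ∨ j - i = 2 ∨ i - j = 3 ∨ j - i = 3)
  symm := ⟨by intro i j ⟨h, hd⟩; exact ⟨h.symm, by tauto⟩⟩
  loopless := ⟨by intro i ⟨h, _⟩; exact h rfl⟩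

/-!
Let `T = Sᶜ`. If `S` contains no three cyclically consecutive vertices, then for every `y` one of
`y + 1, y + 2, y + 3` lies in `T`; sending `y ∈ T` to the first such vertex gives a map
`f : T → T` along edges of `Cₙ³`. Since `f (f y) = y + k` with `2 ≤ k ≤ 6 < n`, the edges
`{y, f y}` are pairwise distinct, so the graph induced on `T` has at least `|T|` edges, which no
forest on a nonempty vertex set has.
-/

namespace SimpleGraph

variable {V : Type*} {G : SimpleGraph V}

theorem IsAcyclic.card_edgeSet_lt [Finite V] [Nonempty V] (hG : G.IsAcyclic) :
    Nat.card G.edgeSet < Nat.card V := by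
  obtain ⟨T, hGT, -, hT⟩ := connected_top.exists_isTree_le_of_le_of_isAcyclic le_top hG
  have hT_card := (isTree_iff_connected_and_card.mp hT).2
  have hGT_card : Nat.card G.edgeSet ≤ Nat.card T.edgeSet :=
    Nat.card_mono (Set.toFinite _) (edgeSet_mono hGT)
  omega

theorem not_isAcyclic_of_forall_adj_apply [Finite V] [Nonempty V] (f : V → V)
    (hadj : ∀ v, G.Adj v (f v)) (hf : ∀ v, f (f v) ≠ v) : ¬ G.IsAcyclic := by
  intro hG
  have hinj : Function.Injective fun v ↦ (⟨s(v, f v), hadj v⟩ : G.edgeSet) := by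
    intro v w hvw
    rcases Sym2.eq_iff.mp (congrArg Subtype.val hvw) with ⟨rfl, -⟩ | ⟨rfl, hw⟩
    · rfl
    · exact absurd hw (hf w)
  exact (Nat.card_le_card_of_injective _ hinj).not_gt hG.card_edgeSet_lt

end SimpleGraph

theorem ZMod.natCast_ne_zero_of_pos_of_lt {n k : ℕ} (hk : 0 < k) (hkn : k < n) :
    (k : ZMod n) ≠ 0 := by
  rw [Ne, ZMod.natCast_eq_zero_iff]
  exact Nat.not_dvd_of_pos_of_lt hk hkn

section CycleCube

variable {n : ℕ}

theorem cycleCube_adj_add_natCast (hn : 4 ≤ n) (y : ZMod n) {k : ℕ} (hk : 1 ≤ k) (hk3 : k ≤ 3) :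
    (cycleCube n).Adj y (y + k) := by
  have hk0 : (k : ZMod n) ≠ 0 := ZMod.natCast_ne_zero_of_pos_of_lt hk (by omega)
  refine ⟨fun h ↦ hk0 (by simpa using h), ?_⟩
  rw [add_sub_cancel_left]
  interval_cases k <;> simp

open Classical in
noncomputable def gapOutside (S : Set (ZMod n)) (y : ZMod n) : ℕ :=
  if y + 1 ∈ S then (if y + 2 ∈ S then 3 else 2) else 1

theorem one_le_gapOutside (S : Set (ZMod n)) (y : ZMod n) : 1 ≤ gapOutside S y := by
  unfold gapOutside; split_ifs <;> omega

theorem gapOutside_le_three (S : Set (ZMod n)) (y : ZMod n) : gapOutside S y ≤ 3 := by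
  unfold gapOutside; split_ifs <;> omega

noncomputable def nextOutside (S : Set (ZMod n)) (y : ZMod n) : ZMod n :=
  y + gapOutside S y

theorem cycleCube_adj_nextOutside (hn : 4 ≤ n) (S : Set (ZMod n)) (y : ZMod n) :
    (cycleCube n).Adj y (nextOutside S y) :=
  cycleCube_adj_add_natCast hn y (one_le_gapOutside S y) (gapOutside_le_three S y)

theorem nextOutside_notMem {S : Set (ZMod n)} (hS : ∀ i, i ∈ S → i + 1 ∈ S → i + 2 ∉ S)
    (y : ZMod n) : nextOutside S y ∉ S := by
  unfold nextOutside gapOutside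
  split_ifs with h1 h2
  · have h3 := hS (y + 1) h1 (by rwa [add_assoc, one_add_one_eq_two])
    convert h3 using 2
    push_cast
    ring
  · simpa using h2
  · simpa using h1

theorem nextOutside_nextOutside_ne (hn : 7 ≤ n) (S : Set (ZMod n)) (y : ZMod n) :
    nextOutside S (nextOutside S y) ≠ y := by
  set k := gapOutside S y + gapOutside S (nextOutside S y)
  have := one_le_gapOutside S y
  have := gapOutside_le_three S y
  have := gapOutside_le_three S (nextOutside S y)
  have hk : (k : ZMod n) ≠ 0 := ZMod.natCast_ne_zero_of_pos_of_lt (by omega) (by omega)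
  intro h
  apply hk
  simp only [nextOutside, k, Nat.cast_add] at h ⊢
  linear_combination h

end CycleCube

/-- For every `n ≥ 7`, every decycling set `S` of `Cₙ³` contains three cyclically consecutive
vertices: there is `i ∈ ℤ/nℤ` with `i, i+1, i+2` all in `S`. -/
theorem cycleCube_decyclingSet_consecutive_triple (n : ℕ) (hn : 7 ≤ n) (S : Set (ZMod n))
    (hS : (cycleCube n).IsDecyclingSet S) :
    ∃ i : ZMod n, i ∈ S ∧ i + 1 ∈ S ∧ i + 2 ∈ S := by
  have : NeZero n := ⟨by omega⟩
  by_contra! hS3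
  obtain ⟨i, hi⟩ : ∃ i, i ∉ S := by
    by_contra! hall
    exact hS3 0 (hall _) (hall _) (hall _)
  have : Nonempty (Sᶜ : Set (ZMod n)) := ⟨⟨i, hi⟩⟩
  let f : (Sᶜ : Set (ZMod n)) → (Sᶜ : Set (ZMod n)) :=
    fun y ↦ ⟨nextOutside S y, nextOutside_notMem hS3 y⟩
  refine not_isAcyclic_of_forall_adj_apply f (fun y ↦ ?_) (fun y h ↦ ?_) hS
  · exact cycleCube_adj_nextOutside (by omega) S y
  · exact nextOutside_nextOutside_ne hn S y (congrArg Subtype.val h)
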